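/- Let k be a field. Let V be the k-vector space with basis e_1, …, e_12 and let T : V → V be the k-linear map with T(e_i) = 0 for i ∈ {1, 7, 11} and T(e_i) = e_{i−1} for all other i (so (V,T) is nilpotent of type given by the partition (6,4,2)). For c ∈ k, let U_c ⊆ V be the subspace spanned by the three elements e_3 + e_8, e_11 − e_8 and c·e_4 + (c−1)·e_9 + e_12 together with all their images under the powers of T. Then each triple X_c = (V, U_c, T) is an indecomposable object of S_k(6) with dimension pair (12, 6), and the X_c are pairwise non-isomorphic: X_c ≅ X_{c'} implies c = c'. -/

import Mathlib

universe u

noncomputable section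

variable (k : Type u) [Field k]

/-- The nilpotent operator `T` on `V = k^12` (basis `e₁, …, e₁₂`, here 0-indexed as
`e 0, …, e 11`) with `T e_i = 0` for `i ∈ {1,7,11}` (0-indexed `{0,6,10}`) and
`T e_i = e_{i−1}` otherwise; `T` is given by the partition `(6,4,2)`. -/
def Tmap : (Fin 12 → k) →ₗ[k] (Fin 12 → k) where
  toFun v j :=
    if h : (j : ℕ) + 1 < 12 then
      if (j : ℕ) = 5 ∨ (j : ℕ) = 9 then 0 else v ⟨(j : ℕ) + 1, h⟩
    else 0
  map_add' v w := by
    funext j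
    by_cases h : (j : ℕ) + 1 < 12
    · by_cases h' : (j : ℕ) = 5 ∨ (j : ℕ) = 9 <;> simp [h, h']
    · simp [h]
  map_smul' c v := by
    funext j
    by_cases h : (j : ℕ) + 1 < 12
    · by_cases h' : (j : ℕ) = 5 ∨ (j : ℕ) = 9 <;> simp [h, h']
    · simp [h]

/-- The generator `e₃ + e₈` (1-indexed), i.e. `e 2 + e 7` (0-indexed). -/
def g₁ : Fin 12 → k := Pi.single 2 1 + Pi.single 7 1

/-- The generator `e₁₁ − e₈` (1-indexed), i.e. `e 10 − e 7` (0-indexed). -/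
def g₂ : Fin 12 → k := Pi.single 10 1 - Pi.single 7 1

/-- The generator `c·e₄ + (c−1)·e₉ + e₁₂` (1-indexed). -/
def g₃ (c : k) : Fin 12 → k :=
  c • (Pi.single 3 1 : Fin 12 → k) + (c - 1) • (Pi.single 8 1 : Fin 12 → k) +
    Pi.single 11 1

/-- The subspace `U_c`, spanned by the three generators together with all their images
under the powers of `T`. -/
def Uc (c : k) : Submodule k (Fin 12 → k) :=
  Submodule.span k {x | ∃ m : ℕ,
    x = (Tmap k ^ m) (g₁ k) ∨ x = (Tmap k ^ m) (g₂ k) ∨ x = (Tmap k ^ m) (g₃ k c)}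

/-- Indecomposability of a triple `(V,U,T)`. -/
def IndecTriple {V : Type u} [AddCommGroup V] [Module k V]
    (U : Submodule k V) (T : V →ₗ[k] V) : Prop :=
  (∃ v : V, v ≠ 0) ∧
    ¬∃ V₁ V₂ : Submodule k V,
        V₁ ≠ ⊥ ∧ V₂ ≠ ⊥ ∧ IsCompl V₁ V₂ ∧
          (∀ x ∈ V₁, T x ∈ V₁) ∧ (∀ x ∈ V₂, T x ∈ V₂) ∧
            U = U ⊓ V₁ ⊔ U ⊓ V₂

/-- Isomorphism of triples `(V,U,T) ≅ (W,U',T')`. -/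
def TripleIso {V W : Type u} [AddCommGroup V] [Module k V] [AddCommGroup W] [Module k W]
    (U : Submodule k V) (T : V →ₗ[k] V) (U' : Submodule k W) (T' : W →ₗ[k] W) : Prop :=
  ∃ e : V ≃ₗ[k] W, (∀ v, e (T v) = T' (e v)) ∧ U.map e.toLinearMap = U'


/-
Coordinates are 0-indexed as in `Tmap`, so the Jordan blocks of `T` have tops `e₅, e₉, e₁₁`.
Since `T³g₁ = T²g₂ = 0` and `Tg₃ = c g₁ + g₂`, the space `U_c` has basis
`T²g₁, Tg₁, g₁, Tg₂, g₂, g₃`, and every `x ∈ U_c` satisfies `x₂ = x₇ + x₁₀` and `x₃ = c x₁₁`.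

An endomorphism `f` of `(V, T)` is determined by `f e₅, f e₉, f e₁₁`; let `a, b, d` be their
`e₅`-, `e₉`-, `e₁₁`-coordinates. On `V / TV`, which is spanned by the tops, `f` acts by a lower
triangular matrix with diagonal `a, b, d`. If `f` maps `U_c` into `U_c'`, the two relations applied
to `f g₁, f g₂, f g₃` give `b = a`, `d = a` and `c a = c' a`. Then `(f - a)³` maps `V` into `TV`,
so `f - a` is nilpotent because `T⁶ = 0`. Thus every idempotent endomorphism of `X_c` is `0` or `1`,
which is indecomposability, and an isomorphism `X_c ≅ X_c'` has `a ≠ 0`, which forces `c = c'`.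
-/

open Module Submodule

section

variable {R M : Type*}

theorem Module.End.range_pow_mul_le_range_pow [Semiring R] [AddCommMonoid M] [Module R M]
    {f g : Module.End R M} (hfg : Commute f g) {m : ℕ}
    (h : LinearMap.range (f ^ m) ≤ LinearMap.range g) (n : ℕ) :
    LinearMap.range (f ^ (m * n)) ≤ LinearMap.range (g ^ n) := by
  induction n with
  | zero => simp
  | succ n ih =>
    rintro _ ⟨x, rfl⟩
    obtain ⟨y, hy⟩ := h ⟨x, rfl⟩
    obtain ⟨z, hz⟩ := ih ⟨y, rfl⟩
    refine ⟨z, ?_⟩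
    calc (g ^ (n + 1)) z = g ((g ^ n) z) := by rw [pow_succ', Module.End.mul_apply]
      _ = (f ^ (m * n)) (g y) := by rw [hz, ← Module.End.mul_apply, ← (hfg.pow_left _).eq]; rfl
      _ = (f ^ (m * (n + 1))) x := by rw [hy, mul_add, mul_one, pow_add, Module.End.mul_apply]

theorem Module.End.isNilpotent_of_range_pow_le [Semiring R] [AddCommMonoid M] [Module R M]
    {f g : Module.End R M} (hfg : Commute f g) {m : ℕ}
    (h : LinearMap.range (f ^ m) ≤ LinearMap.range g) (hg : IsNilpotent g) : IsNilpotent f := by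
  obtain ⟨n, hn⟩ := hg
  refine ⟨m * n, LinearMap.range_eq_bot.1 (eq_bot_iff.2 ?_)⟩
  simpa [hn] using range_pow_mul_le_range_pow hfg h n

variable [Ring R] [AddCommGroup M] [Module R M] {p q : Submodule R M}

theorem Submodule.commute_projection (hpq : IsCompl p q) {T : Module.End R M}
    (hp : ∀ x ∈ p, T x ∈ p) (hq : ∀ x ∈ q, T x ∈ q) : Commute (p.projection q hpq) T := by
  refine LinearMap.ext fun x => ?_
  change p.projection q hpq (T x) = T (p.projection q hpq x)
  conv_lhs => rw [← projection_add_projection_eq_self hpq x]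
  rw [map_add, map_add, projection_apply_of_mem_left hpq (hp _ (projection_apply_mem hpq x)),
    projection_apply_of_mem_right hpq (hq _ (projection_apply_mem hpq.symm x)), add_zero]

theorem Submodule.projection_mem_of_eq_inf_sup_inf (hpq : IsCompl p q) {U : Submodule R M}
    (hU : U = U ⊓ p ⊔ U ⊓ q) {x : M} (hx : x ∈ U) : p.projection q hpq x ∈ U := by
  rw [hU] at hx
  obtain ⟨y, hy, z, hz, rfl⟩ := mem_sup.1 hx
  rw [map_add, projection_apply_of_mem_left hpq hy.2, projection_apply_of_mem_right hpq hz.2,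
    add_zero]
  exact hy.1

end

section

variable {k}

local notation "T" => Tmap k

theorem Tmap_pow_six : T ^ 6 = 0 := by
  ext x j
  fin_cases j <;> rfl

theorem Tmap_mem_Uc {c : k} {x : Fin 12 → k} (hx : x ∈ Uc k c) : T x ∈ Uc k c := by
  refine (span_le.2 ?_ : Uc k c ≤ (Uc k c).comap T) hx
  rintro _ ⟨m, rfl | rfl | rfl⟩ <;> refine subset_span ⟨m + 1, ?_⟩ <;>
    simp only [pow_succ', Module.End.mul_apply, true_or, or_true]

theorem Tmap_Tmap_Tmap_g₁ : T (T (T (g₁ k))) = 0 := by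
  ext j; fin_cases j <;> simp [Tmap, g₁]

theorem Tmap_Tmap_g₂ : T (T (g₂ k)) = 0 := by
  ext j; fin_cases j <;> simp [Tmap, g₂]

theorem Tmap_g₃ (c : k) : T (g₃ k c) = c • g₁ k + g₂ k := by
  ext j; fin_cases j <;> simp [Tmap, g₁, g₂, g₃, sub_eq_add_neg]

def ucBasis (c : k) : Fin 6 → Fin 12 → k :=
  ![T (T (g₁ k)), T (g₁ k), g₁ k, T (g₂ k), g₂ k, g₃ k c]

theorem g₁_mem_Uc (c : k) : g₁ k ∈ Uc k c := subset_span ⟨0, by simp⟩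

theorem g₂_mem_Uc (c : k) : g₂ k ∈ Uc k c := subset_span ⟨0, by simp⟩

theorem g₃_mem_Uc (c : k) : g₃ k c ∈ Uc k c := subset_span ⟨0, by simp⟩

theorem ucBasis_mem_Uc (c : k) (i : Fin 6) : ucBasis c i ∈ Uc k c := by
  fin_cases i
  exacts [Tmap_mem_Uc (Tmap_mem_Uc (g₁_mem_Uc c)), Tmap_mem_Uc (g₁_mem_Uc c), g₁_mem_Uc c,
    Tmap_mem_Uc (g₂_mem_Uc c), g₂_mem_Uc c, g₃_mem_Uc c]

theorem Tmap_mem_span_ucBasis {c : k} {x : Fin 12 → k}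
    (hx : x ∈ span k (Set.range (ucBasis c))) : T x ∈ span k (Set.range (ucBasis c)) := by
  refine (span_le.2 ?_ : _ ≤ (span k (Set.range (ucBasis c))).comap T) hx
  rintro _ ⟨i, rfl⟩
  have mem (j : Fin 6) : ucBasis c j ∈ span k (Set.range (ucBasis c)) := subset_span ⟨j, rfl⟩
  fin_cases i
  · simp [ucBasis, Tmap_Tmap_Tmap_g₁]
  · exact mem 0
  · exact mem 1
  · simp [ucBasis, Tmap_Tmap_g₂]
  · exact mem 3
  · simpa [ucBasis, Tmap_g₃] using add_mem (smul_mem _ c (mem 2)) (mem 4)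

theorem Uc_eq_span_ucBasis (c : k) : Uc k c = span k (Set.range (ucBasis c)) := by
  refine le_antisymm (span_le.2 ?_) (span_le.2 (Set.range_subset_iff.2 (ucBasis_mem_Uc c)))
  have mem (j : Fin 6) : ucBasis c j ∈ span k (Set.range (ucBasis c)) := subset_span ⟨j, rfl⟩
  rintro _ ⟨m, rfl | rfl | rfl⟩
  exacts [Module.End.pow_apply_mem_of_forall_mem m (fun _ => Tmap_mem_span_ucBasis) _ (mem 2),
    Module.End.pow_apply_mem_of_forall_mem m (fun _ => Tmap_mem_span_ucBasis) _ (mem 4),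
    Module.End.pow_apply_mem_of_forall_mem m (fun _ => Tmap_mem_span_ucBasis) _ (mem 5)]

theorem linearIndependent_ucBasis (c : k) : LinearIndependent k (ucBasis c) := by
  rw [Fintype.linearIndependent_iff]
  intro a ha
  have h₀ := congrFun ha 0
  have h₁ := congrFun ha 1
  have h₂ := congrFun ha 2
  have h₆ := congrFun ha 6
  have h₁₀ := congrFun ha 10
  have h₁₁ := congrFun ha 11
  simp [Fin.sum_univ_succ, ucBasis, Tmap, g₁, g₂, g₃] at h₀ h₁ h₂ h₆ h₁₀ h₁₁
  have h₃ : a 3 = 0 := by linear_combination h₁ - h₆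
  intro i
  fin_cases i <;> assumption

theorem finrank_Uc (c : k) : finrank k (Uc k c) = 6 := by
  rw [Uc_eq_span_ucBasis, finrank_span_eq_card (linearIndependent_ucBasis c), Fintype.card_fin]

theorem coord_relations_of_mem_Uc {c : k} {x : Fin 12 → k} (hx : x ∈ Uc k c) :
    x 2 = x 7 + x 10 ∧ x 3 = c * x 11 := by
  rw [Uc_eq_span_ucBasis, mem_span_range_iff_exists_fun] at hx
  obtain ⟨a, rfl⟩ := hx
  simp [Fin.sum_univ_succ, ucBasis, Tmap, g₁, g₂, g₃, mul_comm]

theorem g₁_eq : g₁ k = T (T (T (Pi.single 5 1))) + T (T (Pi.single 9 1)) := by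
  ext j; fin_cases j <;> simp [Tmap, g₁]

theorem g₂_eq : g₂ k = T (Pi.single 11 1) - T (T (Pi.single 9 1)) := by
  ext j; fin_cases j <;> simp [Tmap, g₂]

theorem g₃_eq (c : k) :
    g₃ k c = c • T (T (Pi.single 5 1)) + (c - 1) • T (Pi.single 9 1) + Pi.single 11 1 := by
  ext j; fin_cases j <;> simp [Tmap, g₃]

theorem exists_eq_Tmap_add (x : Fin 12 → k) :
    ∃ y, x = T y + x 5 • Pi.single 5 1 + x 9 • Pi.single 9 1 + x 11 • Pi.single 11 1 :=
  ⟨![0, x 0, x 1, x 2, x 3, x 4, 0, x 6, x 7, x 8, 0, x 10], by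
    ext j; fin_cases j <;> simp [Tmap]⟩

section Endomorphism

variable {f : Module.End k (Fin 12 → k)}

theorem apply_Tmap (hf : Commute f T) (v : Fin 12 → k) : f (T v) = T (f v) :=
  LinearMap.congr_fun hf.eq v

theorem apply_single_nine_eq_zero (hf : Commute f T) :
    f (Pi.single 9 1) 4 = 0 ∧ f (Pi.single 9 1) 5 = 0 := by
  have h : T (T (T (T (f (Pi.single 9 1))))) = 0 := by
    simp only [← apply_Tmap hf]
    rw [show T (T (T (T (Pi.single 9 1)))) = 0 by ext j; fin_cases j <;> simp [Tmap], map_zero]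
  exact ⟨congrFun h 0, congrFun h 1⟩

theorem apply_single_eleven_eq_zero (hf : Commute f T) :
    f (Pi.single 11 1) 3 = 0 ∧ f (Pi.single 11 1) 5 = 0 ∧ f (Pi.single 11 1) 8 = 0 ∧
      f (Pi.single 11 1) 9 = 0 := by
  have h : T (T (f (Pi.single 11 1))) = 0 := by
    simp only [← apply_Tmap hf]
    rw [show T (T (Pi.single 11 1)) = 0 by ext j; fin_cases j <;> simp [Tmap], map_zero]
  exact ⟨congrFun h 1, congrFun h 3, congrFun h 6, congrFun h 7⟩

theorem apply_top_coords (hf : Commute f T) (x : Fin 12 → k) :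
    f x 5 = x 5 * f (Pi.single 5 1) 5 ∧
      f x 9 = x 5 * f (Pi.single 5 1) 9 + x 9 * f (Pi.single 9 1) 9 ∧
      f x 11 = x 5 * f (Pi.single 5 1) 11 + x 9 * f (Pi.single 9 1) 11 +
        x 11 * f (Pi.single 11 1) 11 := by
  obtain ⟨y, hy⟩ := exists_eq_Tmap_add x
  have hfx : f x = T (f y) + x 5 • f (Pi.single 5 1) + x 9 • f (Pi.single 9 1) +
      x 11 • f (Pi.single 11 1) := by
    conv_lhs => rw [hy]
    simp only [map_add, map_smul, apply_Tmap hf]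
  obtain ⟨-, h95⟩ := apply_single_nine_eq_zero hf
  obtain ⟨-, h115, -, h119⟩ := apply_single_eleven_eq_zero hf
  simp [hfx, Tmap, h95, h115, h119]

theorem range_pow_three_le_range_Tmap (hf : Commute f T) (h5 : f (Pi.single 5 1) 5 = 0)
    (h9 : f (Pi.single 9 1) 9 = 0) (h11 : f (Pi.single 11 1) 11 = 0) :
    LinearMap.range (f ^ 3) ≤ LinearMap.range T := by
  rintro _ ⟨x, rfl⟩
  obtain ⟨h₁, -, -⟩ := apply_top_coords hf x
  obtain ⟨h₂, h₂', -⟩ := apply_top_coords hf (f x)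
  obtain ⟨h₃, h₃', h₃''⟩ := apply_top_coords hf (f (f x))
  obtain ⟨y, hy⟩ := exists_eq_Tmap_add ((f ^ 3) x)
  refine ⟨y, ?_⟩
  simp only [pow_succ, pow_zero, one_mul, Module.End.mul_apply] at hy ⊢
  simp [hy, h₁, h₂, h₂', h₃, h₃', h₃'', h5, h9, h11]

theorem isNilpotent_sub_smul (hf : Commute f T) (h9 : f (Pi.single 9 1) 9 = f (Pi.single 5 1) 5)
    (h11 : f (Pi.single 11 1) 11 = f (Pi.single 5 1) 5) :
    IsNilpotent (f - f (Pi.single 5 1) 5 • 1) := by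
  have hg : Commute (f - f (Pi.single 5 1) 5 • 1) T :=
    hf.sub_left ((Commute.one_left _).smul_left _)
  refine Module.End.isNilpotent_of_range_pow_le hg
    (range_pow_three_le_range_Tmap hg ?_ ?_ ?_) ⟨6, Tmap_pow_six⟩ <;> simp [h9, h11]

theorem top_coeffs_eq_of_mapsTo_Uc (hf : Commute f T) {c c' : k}
    (hU : ∀ x ∈ Uc k c, f x ∈ Uc k c') :
    f (Pi.single 9 1) 9 = f (Pi.single 5 1) 5 ∧ f (Pi.single 11 1) 11 = f (Pi.single 5 1) 5 ∧
      c * f (Pi.single 5 1) 5 = c' * f (Pi.single 5 1) 5 := by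
  obtain ⟨q₁, -⟩ := coord_relations_of_mem_Uc (hU _ (g₁_mem_Uc c))
  obtain ⟨q₂, -⟩ := coord_relations_of_mem_Uc (hU _ (g₂_mem_Uc c))
  obtain ⟨-, q₃⟩ := coord_relations_of_mem_Uc (hU _ (g₃_mem_Uc c))
  rw [g₁_eq] at q₁
  rw [g₂_eq] at q₂
  rw [g₃_eq] at q₃
  simp only [map_add, map_sub, map_smul, apply_Tmap hf] at q₁ q₂ q₃
  simp [Tmap] at q₁ q₂ q₃
  obtain ⟨h94, -⟩ := apply_single_nine_eq_zero hf
  obtain ⟨h113, -, h118, -⟩ := apply_single_eleven_eq_zero hf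
  have hb : f (Pi.single 9 1) 9 = f (Pi.single 5 1) 5 := by linear_combination h94 - q₁
  have hd : f (Pi.single 11 1) 11 = f (Pi.single 5 1) 5 := by
    linear_combination hb - q₂ + h113 - h94 - h118
  exact ⟨hb, hd, by linear_combination q₃ - (c - 1) * h94 - h113 + c' * hd⟩

theorem eq_zero_or_eq_one_of_isIdempotentElem (hf : Commute f T) {c : k}
    (hU : ∀ x ∈ Uc k c, f x ∈ Uc k c) (hidem : IsIdempotentElem f) : f = 0 ∨ f = 1 := by
  obtain ⟨h9, h11, -⟩ := top_coeffs_eq_of_mapsTo_Uc hf hU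
  have hnil := isNilpotent_sub_smul hf h9 h11
  have ha : IsIdempotentElem (f (Pi.single 5 1) 5) := by
    have h := (apply_top_coords hf (f (Pi.single 5 1))).1
    rwa [← Module.End.mul_apply, hidem.eq, eq_comm] at h
  rcases IsIdempotentElem.iff_eq_zero_or_one.1 ha with ha | ha
  · rw [ha, zero_smul, sub_zero] at hnil
    exact Or.inl (hidem.eq_zero_of_isNilpotent hnil)
  · rw [ha, one_smul, ← neg_sub, isNilpotent_neg_iff] at hnil
    exact Or.inr (sub_eq_zero.1 (hidem.one_sub.eq_zero_of_isNilpotent hnil)).symm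

end Endomorphism

theorem indecTriple_Uc (c : k) : IndecTriple k (Uc k c) T := by
  refine ⟨⟨Pi.single 0 1, by simp⟩, ?_⟩
  rintro ⟨V₁, V₂, h₁, h₂, hV, hT₁, hT₂, hU⟩
  rcases eq_zero_or_eq_one_of_isIdempotentElem (commute_projection hV hT₁ hT₂)
    (fun _ => projection_mem_of_eq_inf_sup_inf hV hU) (isIdempotentElem_projection hV) with h | h
  · exact h₁ (by rw [← range_projection hV, h, LinearMap.range_zero])
  · exact h₂ (by rw [← ker_projection hV, h, Module.End.one_eq_id, LinearMap.ker_id])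

theorem eq_of_tripleIso {c c' : k} (h : TripleIso k (Uc k c) T (Uc k c') T) : c = c' := by
  obtain ⟨e, he, hU⟩ := h
  have hf : Commute (e : Module.End k (Fin 12 → k)) T := LinearMap.ext he
  obtain ⟨h9, h11, hc⟩ := top_coeffs_eq_of_mapsTo_Uc hf fun x hx => hU ▸ mem_map_of_mem hx
  refine mul_right_cancel₀ (fun ha => ?_) hc
  have hnil := isNilpotent_sub_smul hf h9 h11
  rw [ha, zero_smul, sub_zero] at hnil
  exact hnil.not_isUnit ((Module.End.isUnit_iff _).2 e.bijective)

end

/-- The one-parameter family `X_c = (V, U_c, T)`: each `X_c` is an indecomposable object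
of `S_k(6)` with dimension pair `(12,6)`, and the `X_c` are pairwise non-isomorphic. -/
theorem stmt15 :
    Tmap k ^ 6 = 0 ∧
    (∀ c : k,
      (∀ x ∈ Uc k c, Tmap k x ∈ Uc k c) ∧
      IndecTriple k (Uc k c) (Tmap k) ∧
      Module.finrank k (Fin 12 → k) = 12 ∧
      Module.finrank k ↥(Uc k c) = 6) ∧
    ∀ c c' : k, TripleIso k (Uc k c) (Tmap k) (Uc k c') (Tmap k) → c = c' :=
  ⟨Tmap_pow_six, fun c => ⟨fun _ => Tmap_mem_Uc, indecTriple_Uc c, finrank_fin_fun k,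
    finrank_Uc c⟩, fun _ _ => eq_of_tripleIso⟩

end
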